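/- arXiv:1710.00408 — 3 statements merged into one kernel-verified Lean document; each statement's English description precedes it below -/
import Mathlib

section
/- Let n ≥ 2, N = 2n, and h = 1/n. Then R_{o,h} T_h^P E_{o,h} = T_h^D, i.e., restricting the periodic second-difference matrix through the odd extension yields the Dirichlet second-difference matrix. -/
open Matrix Finset

noncomputable section

/-- The tridiagonal matrix `tridiag(-1, 2, -1)` of size `m × m` (0-based indexing). -/
def tridiag (m : ℕ) : Matrix (Fin m) (Fin m) ℝ :=
  Matrix.of fun i j =>
    if (i : ℕ) = (j : ℕ) then 2
    else if (i : ℕ) + 1 = (j : ℕ) ∨ (j : ℕ) + 1 = (i : ℕ) then -1 else 0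

/-- The odd extension operator `E_{o,h} : ℝ^{n-1} → ℝ^{2n}`, sending the basis vector
`e_i^{n-1}` (math index `i = 1,…,n-1`) to `e_i^{2n} - e_{2n-i}^{2n}`.
In 0-based indexing, column `i` has entry `1` in row `i` and `-1` in row `2n - i - 2`. -/
def oddExt (n : ℕ) : Matrix (Fin (2 * n)) (Fin (n - 1)) ℝ :=
  Matrix.of fun k i =>
    if (k : ℕ) = (i : ℕ) then 1
    else if (k : ℕ) + (i : ℕ) + 2 = 2 * n then -1 else 0

/-- The restriction operator `R_{o,h} = (1/2) E_{o,h}ᵀ`. -/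
def oddRestr (n : ℕ) : Matrix (Fin (n - 1)) (Fin (2 * n)) ℝ :=
  (2 : ℝ)⁻¹ • (oddExt n)ᵀ

/-- The Dirichlet matrix `T_h^D = (1/h²) · tridiag(-1, 2, -1)`, with `h = 1/n`
(so `1/h² = n²`). -/
def ThD (n : ℕ) : Matrix (Fin (n - 1)) (Fin (n - 1)) ℝ :=
  ((n : ℝ) ^ 2) • tridiag (n - 1)

/-- The periodic matrix `T_h^P = (1/h²) · (tridiag(-1,2,-1) - e₁ e_Nᵀ - e_N e₁ᵀ)`,
with `h = 1/n`, `N = 2n` (0-based: corners at `(0, 2n-1)` and `(2n-1, 0)`). -/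
def ThP (n : ℕ) : Matrix (Fin (2 * n)) (Fin (2 * n)) ℝ :=
  ((n : ℝ) ^ 2) •
    (tridiag (2 * n)
      - Matrix.of (fun (i j : Fin (2 * n)) => if (i : ℕ) = 0 ∧ (j : ℕ) = 2 * n - 1 then 1 else 0)
      - Matrix.of (fun (i j : Fin (2 * n)) => if (i : ℕ) = 2 * n - 1 ∧ (j : ℕ) = 0 then 1 else 0))

/-- The `d`-fold Kronecker power `X^{⊗d}`, where `ℝ^{a^d}` is identified with the
space of functions `(Fin d → Fin a) → ℝ`. -/
def kronPow {a b : ℕ} (d : ℕ) (X : Matrix (Fin a) (Fin b) ℝ) :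
    Matrix (Fin d → Fin a) (Fin d → Fin b) ℝ :=
  Matrix.of fun i j => ∏ t, X (i t) (j t)

/-- `Σ_{t=1}^d I^{⊗(t-1)} ⊗ T ⊗ I^{⊗(d-t)}` in the function-indexed representation. -/
def kronSumId {m : ℕ} (d : ℕ) (T : Matrix (Fin m) (Fin m) ℝ) :
    Matrix (Fin d → Fin m) (Fin d → Fin m) ℝ :=
  ∑ t : Fin d, Matrix.of fun i j =>
    T (i t) (j t) * ∏ s ∈ Finset.univ.erase t, (if i s = j s then (1 : ℝ) else 0)

/-- The `d`-dimensional discrete Dirichlet reaction-diffusion matrix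
`A_h^D = Σ_j I^{⊗(j-1)} ⊗ T_h^D ⊗ I^{⊗(d-j)} + c I^{⊗d}`. -/
def AD (n d : ℕ) (c : ℝ) : Matrix (Fin d → Fin (n - 1)) (Fin d → Fin (n - 1)) ℝ :=
  kronSumId d (ThD n) + c • 1

/-- The `d`-dimensional discrete periodic reaction-diffusion matrix
`A_h^P = Σ_j I^{⊗(j-1)} ⊗ T_h^P ⊗ I^{⊗(d-j)} + c I^{⊗d}`. -/
def AP (n d : ℕ) (c : ℝ) : Matrix (Fin d → Fin (2 * n)) (Fin d → Fin (2 * n)) ℝ :=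
  kronSumId d (ThP n) + c • 1

/-- A pair `(M^D, M^P)` is LFA-compatible with respect to an extension `E` and a
restriction `R` if `M^D = R M^P E` and `M^P` maps `range E` into itself. -/
def LFACompatible {α β : Type*} [Fintype α] [Fintype β]
    (E : Matrix α β ℝ) (R : Matrix β α ℝ)
    (MD : Matrix β β ℝ) (MP : Matrix α α ℝ) : Prop :=
  MD = R * MP * E ∧ ∀ v ∈ Set.range E.mulVec, MP *ᵥ v ∈ Set.range E.mulVec

/-! Column `j` of `E_{o,h}` is `e_a - e_b`, with `a` the interior grid point and `b` its mirror
image, so `Eᵀ T E = T_aa - T_ab - T_ba + T_bb` blockwise. The periodic stencil restricted to the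
interior points is the Dirichlet one, it is invariant under the mirror reflection, and it does not
couple an interior point to a mirrored one: those lie at distance at least 2, also across the
periodic wrap-around. Hence `Eᵀ T_h^P E = 2 T_h^D`, and the factor `1/2` in `R_{o,h}` cancels. -/

namespace Matrix

variable {l m n R : Type*} [Fintype m] [DecidableEq m] [CommRing R]

lemma mul_one_submatrix_id (M : Matrix l m R) (b : n → m) :
    M * (1 : Matrix m m R).submatrix id b = M.submatrix id b :=
  mul_submatrix_one (Equiv.refl m) b M

lemma one_submatrix_id_mul (M : Matrix m l R) (a : n → m) :
    (1 : Matrix m m R).submatrix a id * M = M.submatrix a id :=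
  one_submatrix_mul a (Equiv.refl m) M

lemma transpose_mul_mul_one_submatrix_sub [Fintype n] (T : Matrix m m R) (a b : n → m) :
    ((1 : Matrix m m R).submatrix id a - (1 : Matrix m m R).submatrix id b)ᵀ * T *
        ((1 : Matrix m m R).submatrix id a - (1 : Matrix m m R).submatrix id b) =
      T.submatrix a a - T.submatrix a b - T.submatrix b a + T.submatrix b b := by
  simp only [transpose_sub, Matrix.sub_mul, Matrix.mul_sub]
  simp only [transpose_submatrix, transpose_one, one_submatrix_id_mul, mul_one_submatrix_id,
    submatrix_submatrix, Function.id_comp, Function.comp_id]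
  abel

end Matrix

def oddExtPos (n : ℕ) : Fin (n - 1) → Fin (2 * n) := fun j => ⟨j, by omega⟩

def oddExtNeg (n : ℕ) : Fin (n - 1) → Fin (2 * n) := fun j => ⟨2 * n - 2 - j, by omega⟩

lemma oddExt_eq_sub (n : ℕ) :
    oddExt n = (1 : Matrix _ _ ℝ).submatrix id (oddExtPos n) -
      (1 : Matrix _ _ ℝ).submatrix id (oddExtNeg n) := by
  ext k j
  have := j.isLt
  simp only [oddExt, oddExtPos, oddExtNeg, of_apply, Matrix.sub_apply, submatrix_apply, id,
    one_apply, Fin.ext_iff]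
  split_ifs <;> first | omega | norm_num

lemma ThP_submatrix_oddExtPos (n : ℕ) :
    (ThP n).submatrix (oddExtPos n) (oddExtPos n) = ThD n := by
  ext i j
  have := i.isLt
  have := j.isLt
  simp only [ThP, ThD, tridiag, oddExtPos, submatrix_apply, Matrix.smul_apply, Matrix.sub_apply,
    of_apply]
  split_ifs <;> first | omega | simp

lemma ThP_submatrix_oddExtNeg (n : ℕ) :
    (ThP n).submatrix (oddExtNeg n) (oddExtNeg n) = ThD n := by
  ext i j
  have := i.isLt
  have := j.isLt
  simp only [ThP, ThD, tridiag, oddExtNeg, submatrix_apply, Matrix.smul_apply, Matrix.sub_apply,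
    of_apply]
  split_ifs <;> first | omega | simp

lemma ThP_submatrix_oddExtPos_oddExtNeg (n : ℕ) :
    (ThP n).submatrix (oddExtPos n) (oddExtNeg n) = 0 := by
  ext i j
  have := i.isLt
  have := j.isLt
  simp only [ThP, tridiag, oddExtPos, oddExtNeg, submatrix_apply, Matrix.smul_apply,
    Matrix.sub_apply, of_apply, Matrix.zero_apply]
  split_ifs <;> first | omega | simp

lemma ThP_submatrix_oddExtNeg_oddExtPos (n : ℕ) :
    (ThP n).submatrix (oddExtNeg n) (oddExtPos n) = 0 := by
  ext i j
  have := i.isLt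
  have := j.isLt
  simp only [ThP, tridiag, oddExtPos, oddExtNeg, submatrix_apply, Matrix.smul_apply,
    Matrix.sub_apply, of_apply, Matrix.zero_apply]
  split_ifs <;> first | omega | simp

theorem oddRestr_ThP_oddExt_general (n : ℕ) :
    oddRestr n * ThP n * oddExt n = ThD n := by
  rw [oddRestr, Matrix.smul_mul, Matrix.smul_mul, oddExt_eq_sub,
    transpose_mul_mul_one_submatrix_sub, ThP_submatrix_oddExtPos, ThP_submatrix_oddExtNeg,
    ThP_submatrix_oddExtPos_oddExtNeg, ThP_submatrix_oddExtNeg_oddExtPos]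
  module

/-- `R_{o,h} T_h^P E_{o,h} = T_h^D` (with `h = 1/n`). -/
theorem oddRestr_ThP_oddExt (n : ℕ) (hn : 2 ≤ n) :
    oddRestr n * ThP n * oddExt n = ThD n :=
  oddRestr_ThP_oddExt_general n
end
end

section
/- Let n ≥ 2, N = 2n, h = 1/n, d ≥ 1, and c ∈ ℝ. Then A_h^D = R_{o,h}^{⊗d} A_h^P E_{o,h}^{⊗d}, where A_h^D and A_h^P are the d-dimensional discrete Dirichlet and periodic reaction–diffusion matrices. -/
open Matrix Finset

noncomputable section

/-!
By the mixed-product rule `(⊗ₜ Fₜ)(⊗ₜ Gₜ) = ⊗ₜ (Fₜ Gₜ)`, each term `I ⊗ ⋯ ⊗ T^P ⊗ ⋯ ⊗ I` is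
sandwiched factorwise, so the claim reduces to the one-dimensional identities `R E = 1` and
`R T^P E = T^D`. Column `i` of `E` is `e_i - e_{i'}` with `i' = N - i` the mirror image of `i`
through the boundary point `n`, so an entry of `R M E` is an alternating average of four
entries of `M`; for `M = T^P` the two cross terms vanish because `j` and `i'` are never
neighbours on the periodic grid.
-/

section piKron

variable {ι R α β γ : Type*} [Fintype ι] [CommSemiring R]

def piKron (F : ι → Matrix α β R) : Matrix (ι → α) (ι → β) R :=
  of fun i j => ∏ t, F t (i t) (j t)

theorem piKron_mul_piKron [DecidableEq ι] [Fintype β] (F : ι → Matrix α β R)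
    (G : ι → Matrix β γ R) : piKron F * piKron G = piKron fun t => F t * G t := by
  ext i j
  simp only [piKron, mul_apply, of_apply, Fintype.prod_sum, prod_mul_distrib]

theorem piKron_one [DecidableEq α] : piKron (fun _ : ι => (1 : Matrix α α R)) = 1 := by
  ext i j
  by_cases hij : i = j
  · subst hij
    simp [piKron]
  · obtain ⟨t, ht⟩ := Function.ne_iff.mp hij
    rw [one_apply_ne hij, piKron, of_apply]
    exact prod_eq_zero (mem_univ t) (one_apply_ne ht)

end piKron

theorem kronSumId_eq_sum_piKron {m d : ℕ} (T : Matrix (Fin m) (Fin m) ℝ) :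
    kronSumId d T = ∑ t : Fin d, piKron (Function.update 1 t T) := by
  refine sum_congr rfl fun t _ => ?_
  ext i j
  rw [piKron, of_apply, of_apply, ← mul_prod_erase univ _ (mem_univ t),
    Function.update_self]
  congr 1
  refine prod_congr rfl fun s hs => ?_
  rw [Function.update_of_ne (ne_of_mem_erase hs), Pi.one_apply, one_apply]

section kronPow

variable {a b d : ℕ}

theorem kronPow_eq_piKron (X : Matrix (Fin a) (Fin b) ℝ) : kronPow d X = piKron fun _ => X :=
  rfl

theorem kronPow_mul_kronPow (R : Matrix (Fin b) (Fin a) ℝ) (E : Matrix (Fin a) (Fin b) ℝ) :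
    kronPow d R * kronPow d E = kronPow d (R * E) := by
  simp only [kronPow_eq_piKron, piKron_mul_piKron]

theorem kronPow_one : kronPow d (1 : Matrix (Fin a) (Fin a) ℝ) = 1 := by
  rw [kronPow_eq_piKron, piKron_one]

theorem kronPow_mul_kronSumId_mul_kronPow {R : Matrix (Fin b) (Fin a) ℝ}
    {E : Matrix (Fin a) (Fin b) ℝ} (hRE : R * E = 1) (T : Matrix (Fin a) (Fin a) ℝ) :
    kronPow d R * kronSumId d T * kronPow d E = kronSumId d (R * T * E) := by
  simp only [kronSumId_eq_sum_piKron, Matrix.mul_sum, Matrix.sum_mul]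
  refine sum_congr rfl fun t _ => ?_
  have hsandwich :
      (fun s => R * Function.update (1 : Fin d → Matrix (Fin a) (Fin a) ℝ) t T s * E) =
        Function.update (1 : Fin d → Matrix (Fin b) (Fin b) ℝ) t (R * T * E) := by
    funext s
    rcases eq_or_ne s t with rfl | hst
    · simp only [Function.update_self]
    · simp only [Function.update_of_ne hst, Pi.one_apply, Matrix.mul_one, hRE]
  rw [kronPow_eq_piKron, kronPow_eq_piKron, piKron_mul_piKron, piKron_mul_piKron, ← hsandwich]

end kronPow

section oddExt

variable {n : ℕ}

/-- In 0-based indexing: the reflection `N - (i + 1)` of the point `i + 1` has index `2n - 2 - i`. -/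
def oddMirror (i : Fin (n - 1)) : Fin (2 * n) :=
  ⟨2 * n - 2 - i, by omega⟩

theorem oddExt_apply (k : Fin (2 * n)) (i : Fin (n - 1)) :
    oddExt n k i = (if k = Fin.castLE (by omega) i then 1 else 0)
      - (if k = oddMirror i then 1 else 0) := by
  have := i.isLt
  simp only [oddExt, oddMirror, of_apply, Fin.ext_iff, Fin.val_castLE]
  split_ifs <;> first | omega | norm_num

theorem oddRestr_mul_mul_oddExt_apply (M : Matrix (Fin (2 * n)) (Fin (2 * n)) ℝ)
    (j i : Fin (n - 1)) :
    (oddRestr n * M * oddExt n) j i =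
      2⁻¹ * (M (Fin.castLE (by omega) j) (Fin.castLE (by omega) i)
        - M (Fin.castLE (by omega) j) (oddMirror i)
        - M (oddMirror j) (Fin.castLE (by omega) i) + M (oddMirror j) (oddMirror i)) := by
  simp only [mul_apply, oddRestr, Matrix.smul_apply, transpose_apply, smul_eq_mul, oddExt_apply,
    sub_mul, mul_sub, ite_mul, mul_ite, mul_one, zero_mul, mul_zero, sum_sub_distrib,
    sum_ite_eq', mem_univ, if_true]
  ring

theorem oddRestr_mul_oddExt : oddRestr n * oddExt n = 1 := by
  ext j i
  have hj := j.isLt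
  have hi := i.isLt
  rw [← Matrix.mul_one (oddRestr n), oddRestr_mul_mul_oddExt_apply]
  simp only [one_apply, oddMirror, Fin.ext_iff, Fin.val_castLE]
  split_ifs <;> first | omega | norm_num

theorem oddRestr_mul_ThP_mul_oddExt : oddRestr n * ThP n * oddExt n = ThD n := by
  ext j i
  have hj := j.isLt
  have hi := i.isLt
  have hnear : ThP n (Fin.castLE (by omega) j) (Fin.castLE (by omega) i) = ThD n j i := by
    simp only [ThP, ThD, tridiag, Matrix.smul_apply, Matrix.sub_apply, of_apply, smul_eq_mul,
      Fin.val_castLE]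
    split_ifs <;> first | omega | ring
  have hfar : ThP n (oddMirror j) (oddMirror i) = ThD n j i := by
    simp only [ThP, ThD, tridiag, oddMirror, Matrix.smul_apply, Matrix.sub_apply, of_apply,
      smul_eq_mul]
    split_ifs <;> first | omega | ring
  have hcross₁ : ThP n (Fin.castLE (by omega) j) (oddMirror i) = 0 := by
    simp only [ThP, tridiag, oddMirror, Matrix.smul_apply, Matrix.sub_apply, of_apply,
      smul_eq_mul, Fin.val_castLE]
    split_ifs <;> first | omega | ring
  have hcross₂ : ThP n (oddMirror j) (Fin.castLE (by omega) i) = 0 := by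
    simp only [ThP, tridiag, oddMirror, Matrix.smul_apply, Matrix.sub_apply, of_apply,
      smul_eq_mul, Fin.val_castLE]
    split_ifs <;> first | omega | ring
  rw [oddRestr_mul_mul_oddExt_apply, hnear, hfar, hcross₁, hcross₂]
  ring

end oddExt

theorem AD_eq_restr_AP_ext_general (n d : ℕ) (c : ℝ) :
    AD n d c = kronPow d (oddRestr n) * AP n d c * kronPow d (oddExt n) := by
  rw [AD, AP, Matrix.mul_add, Matrix.add_mul,
    kronPow_mul_kronSumId_mul_kronPow oddRestr_mul_oddExt, oddRestr_mul_ThP_mul_oddExt,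
    Matrix.mul_smul, Matrix.smul_mul, Matrix.mul_one, kronPow_mul_kronPow, oddRestr_mul_oddExt,
    kronPow_one]

/-- `A_h^D = R_{o,h}^{⊗d} A_h^P E_{o,h}^{⊗d}`. -/
theorem AD_eq_restr_AP_ext (n d : ℕ) (hn : 2 ≤ n) (hd : 1 ≤ d) (c : ℝ) :
    AD n d c = kronPow d (oddRestr n) * AP n d c * kronPow d (oddExt n) :=
  AD_eq_restr_AP_ext_general n d c
end
end

section
/- Let n ≥ 2, N = 2n, h = 1/n, d ≥ 1, and c ∈ ℝ. If u ∈ ℝ^{(n−1)^d} satisfies A_h^D u = f, then A_h^P (E_{o,h}^{⊗d} u) = E_{o,h}^{⊗d} f. -/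
open Matrix Finset

noncomputable section

/-!
The odd extension intertwines the two operators already in one dimension,
`T_h^P E_{o,h} = E_{o,h} T_h^D`: the periodic second difference of an odd grid function is odd,
and at the mirror points `0` and `n`, where the odd extension vanishes, it sees exactly the zero
Dirichlet boundary values. The mixed-product property of Kronecker products lifts this to
`A_h^P E_{o,h}^{⊗d} = E_{o,h}^{⊗d} A_h^D`, and the claim follows by applying both sides to `u`.
-/

section KroneckerProduct

variable {R ι α β γ : Type*} [CommSemiring R] [Fintype ι]

def kronProd (X : ι → Matrix α β R) : Matrix (ι → α) (ι → β) R :=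
  Matrix.of fun i j => ∏ t, X t (i t) (j t)

theorem kronProd_mul_kronProd [Fintype β] [DecidableEq ι] (X : ι → Matrix α β R)
    (Y : ι → Matrix β γ R) : kronProd X * kronProd Y = kronProd fun t => X t * Y t := by
  ext i j
  simp only [kronProd, mul_apply, of_apply, ← prod_mul_distrib]
  rw [prod_univ_sum, Fintype.piFinset_univ]

end KroneckerProduct

theorem kronPow_eq_kronProd {a b : ℕ} (d : ℕ) (X : Matrix (Fin a) (Fin b) ℝ) :
    kronPow d X = kronProd fun _ => X := rfl

theorem kronSumId_eq_sum_kronProd {m : ℕ} (d : ℕ) (T : Matrix (Fin m) (Fin m) ℝ) :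
    kronSumId d T = ∑ t, kronProd (Function.update 1 t T) := by
  refine sum_congr rfl fun t _ => ?_
  ext i j
  rw [kronProd, of_apply, of_apply, ← mul_prod_erase _ _ (mem_univ t), Function.update_self]
  congr 1
  refine prod_congr rfl fun s hs => ?_
  rw [Function.update_of_ne (ne_of_mem_erase hs), Pi.one_apply, one_apply]

theorem kronSumId_mul_kronPow {a b : ℕ} (d : ℕ) {T : Matrix (Fin a) (Fin a) ℝ}
    {E : Matrix (Fin a) (Fin b) ℝ} {S : Matrix (Fin b) (Fin b) ℝ} (h : T * E = E * S) :
    kronSumId d T * kronPow d E = kronPow d E * kronSumId d S := by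
  simp only [kronSumId_eq_sum_kronProd, kronPow_eq_kronProd, Matrix.sum_mul, Matrix.mul_sum,
    kronProd_mul_kronProd]
  refine sum_congr rfl fun t _ => congrArg kronProd ?_
  funext s
  rcases eq_or_ne s t with rfl | hs
  · simp only [Function.update_self, h]
  · simp only [Function.update_of_ne hs, Pi.one_apply, Matrix.one_mul, Matrix.mul_one]

theorem mul_oddExt_apply {n : ℕ} {α : Type*} (M : Matrix α (Fin (2 * n)) ℝ) (k : α)
    (i : Fin (n - 1)) :
    (M * oddExt n) k i = M k ⟨i, by omega⟩ - M k ⟨2 * n - i - 2, by omega⟩ := by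
  have hcol : ∀ j, oddExt n j i = (if j = ⟨i, by omega⟩ then 1 else 0) -
      if j = ⟨2 * n - i - 2, by omega⟩ then 1 else 0 := by
    rintro ⟨j, hj⟩
    have := i.isLt
    simp only [oddExt, of_apply, Fin.mk.injEq]
    split_ifs <;> first | (exfalso; omega) | norm_num
  simp [mul_apply, hcol, mul_sub, sum_sub_distrib]

theorem oddExt_mul_apply {n : ℕ} {β : Type*} (B : Matrix (Fin (n - 1)) β ℝ) (k : Fin (2 * n))
    (j : β) :
    (oddExt n * B) k j =
      (if h : (k : ℕ) < n - 1 then B ⟨k, h⟩ j else 0) -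
        if h : n ≤ k ∧ k ≤ 2 * n - 2 then B ⟨2 * n - 2 - k, by omega⟩ j else 0 := by
  have hrow : ∀ i, oddExt n k i =
      (if h : (k : ℕ) < n - 1 then (if i = ⟨k, h⟩ then 1 else 0) else 0) -
        if h : n ≤ k ∧ k ≤ 2 * n - 2 then (if i = ⟨2 * n - 2 - k, by omega⟩ then 1 else 0)
        else 0 := by
    rintro ⟨i, hi⟩
    have := k.isLt
    simp only [oddExt, of_apply, Fin.mk.injEq]
    split_ifs <;> first | (exfalso; omega) | norm_num
  simp only [mul_apply, hrow, sub_mul, sum_sub_distrib]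
  congr 1 <;> split_ifs <;> simp

theorem ThP_mul_oddExt (n : ℕ) : ThP n * oddExt n = oddExt n * ThD n := by
  rw [ThP, ThD, Matrix.smul_mul, Matrix.mul_smul]
  congr 1
  ext k i
  rw [mul_oddExt_apply, oddExt_mul_apply]
  obtain ⟨k, hk⟩ := k
  obtain ⟨i, hi⟩ := i
  simp only [Matrix.sub_apply, of_apply, tridiag]
  obtain hk | hk | hk | hk :
      k < n - 1 ∨ k = n - 1 ∨ (n ≤ k ∧ k ≤ 2 * n - 2) ∨ k = 2 * n - 1 := by omega
  all_goals
    simp (disch := omega) only [if_pos, if_neg, dif_pos, dif_neg]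
    split_ifs <;> first | (exfalso; omega) | norm_num

theorem AP_mul_kronPow_oddExt (n d : ℕ) (c : ℝ) :
    AP n d c * kronPow d (oddExt n) = kronPow d (oddExt n) * AD n d c := by
  rw [AP, AD, Matrix.add_mul, Matrix.mul_add, kronSumId_mul_kronPow d (ThP_mul_oddExt n),
    Matrix.smul_mul, Matrix.mul_smul, Matrix.one_mul, Matrix.mul_one]

theorem AP_ext_of_AD_general (n d : ℕ) (c : ℝ)
    (u f : (Fin d → Fin (n - 1)) → ℝ) (hu : AD n d c *ᵥ u = f) :
    AP n d c *ᵥ (kronPow d (oddExt n) *ᵥ u) = kronPow d (oddExt n) *ᵥ f := by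
  rw [← hu, mulVec_mulVec, mulVec_mulVec, AP_mul_kronPow_oddExt]

/-- if `A_h^D u = f`, then `A_h^P (E_{o,h}^{⊗d} u) = E_{o,h}^{⊗d} f`. -/
theorem AP_ext_of_AD (n d : ℕ) (hn : 2 ≤ n) (hd : 1 ≤ d) (c : ℝ)
    (u f : (Fin d → Fin (n - 1)) → ℝ) (hu : AD n d c *ᵥ u = f) :
    AP n d c *ᵥ (kronPow d (oddExt n) *ᵥ u) = kronPow d (oddExt n) *ᵥ f :=
  AP_ext_of_AD_general n d c u f hu
end
end
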